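/- arXiv:2306.00063 — 2 statements merged into one kernel-verified Lean document; each statement's English description precedes it below -/
import Mathlib

section
/- For every positive rational r/s, the right q-deformation satisfies [r/s]^♯_q = t_{1,q}^{a_1} t_{2,q}^{-a_2} ⋯ t_{1,q}^{a_{2m-1}} t_{2,q}^{-a_{2m}} · (1/0), where [a_1,...,a_{2m}] is the even-length continued fraction expansion of r/s, the q-matrices are t_{1,q} = [[q,1],[0,1]], t_{2,q} = [[1,0],[-q,q]], and the action on a formal fraction is [[a,b],[c,d]]·(x/y) = (ax+by)/(cx+dy). -/
noncomputable section

def cfVal : List ℤ → ℚ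
  | [] => 0
  | a :: t => a + (cfVal t)⁻¹

def pairsToList (L : List (ℕ × ℕ)) : List ℤ :=
  L.flatMap fun p => [(p.1 : ℤ), (p.2 : ℤ)]

def IsCFE (L : List (ℕ × ℕ)) (x : ℚ) : Prop :=
  L ≠ [] ∧ (∀ p ∈ L, 1 ≤ p.2) ∧ (∀ p ∈ L.tail, 1 ≤ p.1) ∧
    cfVal (pairsToList L) = x

def t1q {K : Type*} [Field K] (q : K) : Matrix (Fin 2) (Fin 2) K := !![q, 1; 0, 1]
def t2q {K : Type*} [Field K] (q : K) : Matrix (Fin 2) (Fin 2) K := !![1, 0; -q, q]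
def t1qInv {K : Type*} [Field K] (q : K) : Matrix (Fin 2) (Fin 2) K := !![q⁻¹, -q⁻¹; 0, 1]
def t2qInv {K : Type*} [Field K] (q : K) : Matrix (Fin 2) (Fin 2) K := !![1, 0; 1, q⁻¹]

def qWord {K : Type*} [Field K] (q : K) : List (ℕ × ℕ) → Matrix (Fin 2) (Fin 2) K
  | [] => 1
  | (a, b) :: rest => t1q q ^ a * t2qInv q ^ b * qWord q rest

def qWordNeg {K : Type*} [Field K] (q : K) : List (ℕ × ℕ) → Matrix (Fin 2) (Fin 2) K
  | [] => 1
  | (a, b) :: rest => t1qInv q ^ a * t2q q ^ b * qWordNeg q rest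

def qSharpK {K : Type*} [Field K] (q : K) (a : ℕ) : K := ∑ i ∈ Finset.range a, q ^ i

def qFlatK {K : Type*} [Field K] (q : K) (a : ℕ) : K :=
  (∑ i ∈ Finset.range (a - 1), q ^ i) + q ^ a

def rightCF {K : Type*} [Field K] (q : K) : List (ℕ × ℕ) → K
  | [] => 0
  | (a, b) :: rest =>
      qSharpK q a + q ^ a / (qSharpK q⁻¹ b + (q⁻¹) ^ b / rightCF q rest)

def leftCF {K : Type*} [Field K] (q : K) : List (ℕ × ℕ) → K
  | [] => 0
  | [(a, b)] => qSharpK q a + q ^ a / qFlatK q⁻¹ b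
  | (a, b) :: rest =>
      qSharpK q a + q ^ a / (qSharpK q⁻¹ b + (q⁻¹) ^ b / leftCF q rest)

def FareyDecomp (p q u v : ℕ) : Prop :=
  Nat.Coprime p q ∧ Nat.Coprime u v ∧ u * q = p * v + 1

def AssocInt (r s l : ℕ) : Prop :=
  ∃ (L : List (ℕ × ℕ)) (a b : ℕ),
    IsCFE L ((r : ℚ) / s) ∧ L.getLast? = some (a, b) ∧
    l = if 2 ≤ b then 0 else a

def bumpLast : List (ℕ × ℕ) → List (ℕ × ℕ)
  | [] => []
  | [(c, d)] => [(c, d + 1)]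
  | x :: xs => x :: bumpLast xs

/-!
Multiplying out `t1q q ^ a * t2qInv q ^ b` shows that the first factor of `qWord q l` acts on
the value of the tail exactly as one step of the continued fraction `rightCF q l`, so the
identity holds as soon as no denominator vanishes. To see that none does, specialise `X` to a
positive transcendental real number: this is a field embedding `ℚ(X) → ℝ`, under which every
entry involved becomes a sum of nonnegative terms, one of them positive.
-/

section

variable {K : Type*} [Field K]

lemma qSharpK_succ (q : K) (n : ℕ) : qSharpK q (n + 1) = qSharpK q n + q ^ n :=
  Finset.sum_range_succ _ _

lemma t1q_pow (q : K) (a : ℕ) : t1q q ^ a = !![q ^ a, qSharpK q a; 0, 1] := by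
  induction a with
  | zero => simp [qSharpK, Matrix.one_fin_two]
  | succ n ih =>
    rw [pow_succ, ih, t1q, Matrix.mul_fin_two, qSharpK_succ]
    simp [pow_succ, add_comm]

lemma t2qInv_pow (q : K) (b : ℕ) :
    t2qInv q ^ b = !![1, 0; qSharpK q⁻¹ b, q⁻¹ ^ b] := by
  induction b with
  | zero => simp [qSharpK, Matrix.one_fin_two]
  | succ n ih =>
    rw [pow_succ, ih, t2qInv, Matrix.mul_fin_two, qSharpK_succ, pow_succ]
    simp

lemma qWord_cons (q : K) (a b : ℕ) (l : List (ℕ × ℕ)) :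
    qWord q ((a, b) :: l) =
      !![q ^ a + qSharpK q a * qSharpK q⁻¹ b, qSharpK q a * q⁻¹ ^ b;
        qSharpK q⁻¹ b, q⁻¹ ^ b] * qWord q l := by
  rw [qWord, t1q_pow, t2qInv_pow, Matrix.mul_fin_two]
  simp

lemma qWord_cons_apply_zero_zero (q : K) (a b : ℕ) (l : List (ℕ × ℕ)) :
    qWord q ((a, b) :: l) 0 0 =
      (q ^ a + qSharpK q a * qSharpK q⁻¹ b) * qWord q l 0 0 +
        qSharpK q a * q⁻¹ ^ b * qWord q l 1 0 := by
  simp [qWord_cons, Matrix.mul_apply, Fin.sum_univ_two]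

lemma qWord_cons_apply_one_zero (q : K) (a b : ℕ) (l : List (ℕ × ℕ)) :
    qWord q ((a, b) :: l) 1 0 = qSharpK q⁻¹ b * qWord q l 0 0 + q⁻¹ ^ b * qWord q l 1 0 := by
  simp [qWord_cons, Matrix.mul_apply, Fin.sum_univ_two]

lemma rightCF_cons_eq_div {q : K} {a b : ℕ} {l : List (ℕ × ℕ)}
    (hl : rightCF q l = qWord q l 0 0 / qWord q l 1 0) (h00 : qWord q l 0 0 ≠ 0)
    (h10 : qWord q ((a, b) :: l) 1 0 ≠ 0) :
    rightCF q ((a, b) :: l) = qWord q ((a, b) :: l) 0 0 / qWord q ((a, b) :: l) 1 0 := by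
  rw [qWord_cons_apply_one_zero] at h10
  have hden : qSharpK q⁻¹ b + q⁻¹ ^ b / (qWord q l 0 0 / qWord q l 1 0) =
      (qSharpK q⁻¹ b * qWord q l 0 0 + q⁻¹ ^ b * qWord q l 1 0) / qWord q l 0 0 := by
    rw [div_div_eq_mul_div]
    field_simp
  rw [rightCF, hl, hden, div_div_eq_mul_div, qWord_cons_apply_zero_zero,
    qWord_cons_apply_one_zero, eq_div_iff h10, add_mul, div_mul_cancel₀ _ h10]
  ring

end

section

variable {K F : Type*} [Field K] [Field F] (f : K →+* F) (q : K)

lemma map_qSharpK (n : ℕ) : f (qSharpK q n) = qSharpK (f q) n := by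
  simp [qSharpK]

lemma map_t1q : f.mapMatrix (t1q q) = t1q (f q) := by
  rw [Matrix.eta_fin_two (f.mapMatrix (t1q q))]
  simp [t1q]

lemma map_t2qInv : f.mapMatrix (t2qInv q) = t2qInv (f q) := by
  rw [Matrix.eta_fin_two (f.mapMatrix (t2qInv q))]
  simp [t2qInv]

lemma map_qWord (l : List (ℕ × ℕ)) : f.mapMatrix (qWord q l) = qWord (f q) l := by
  induction l with
  | nil => simp [qWord]
  | cons p l ih =>
    obtain ⟨a, b⟩ := p
    simp only [qWord, map_mul, map_pow, map_t1q, map_t2qInv, ih]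

lemma map_rightCF (l : List (ℕ × ℕ)) : f (rightCF q l) = rightCF (f q) l := by
  induction l with
  | nil => simp [rightCF]
  | cons p l ih =>
    obtain ⟨a, b⟩ := p
    simp [rightCF, map_qSharpK, ih]

end

section

variable {K : Type*} [Field K] [LinearOrder K] [IsStrictOrderedRing K] {q : K}

lemma qSharpK_nonneg (hq : 0 < q) (n : ℕ) : 0 ≤ qSharpK q n :=
  Finset.sum_nonneg fun _ _ => by positivity

lemma qSharpK_pos (hq : 0 < q) {n : ℕ} (hn : 1 ≤ n) : 0 < qSharpK q n :=
  Finset.sum_pos (fun _ _ => by positivity) ⟨0, Finset.mem_range.mpr hn⟩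

lemma qWord_cons_apply_one_zero_pos (hq : 0 < q) {a b : ℕ} (hb : 1 ≤ b)
    {l : List (ℕ × ℕ)} (h00 : 0 < qWord q l 0 0) (h10 : 0 ≤ qWord q l 1 0) :
    0 < qWord q ((a, b) :: l) 1 0 := by
  rw [qWord_cons_apply_one_zero]
  have := qSharpK_pos (inv_pos.mpr hq) hb
  positivity

lemma qWord_pos_and_rightCF_eq (hq : 0 < q) {l : List (ℕ × ℕ)} (hb : ∀ p ∈ l, 1 ≤ p.2) :
    0 < qWord q l 0 0 ∧ 0 ≤ qWord q l 1 0 ∧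
      rightCF q l = qWord q l 0 0 / qWord q l 1 0 := by
  induction l with
  | nil => simp [qWord, rightCF]
  | cons p l ih =>
    obtain ⟨a, b⟩ := p
    have hb1 : 1 ≤ b := hb (a, b) List.mem_cons_self
    obtain ⟨h00, h10, hl⟩ := ih fun p hp => hb p (List.mem_cons_of_mem _ hp)
    have h10' := qWord_cons_apply_one_zero_pos (a := a) hq hb1 h00 h10
    refine ⟨?_, h10'.le, rightCF_cons_eq_div hl h00.ne' h10'.ne'⟩
    rw [qWord_cons_apply_zero_zero]
    have := qSharpK_nonneg hq a
    have := qSharpK_nonneg (inv_pos.mpr hq) b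
    positivity

lemma qWord_apply_one_zero_pos (hq : 0 < q) {l : List (ℕ × ℕ)} (hne : l ≠ [])
    (hb : ∀ p ∈ l, 1 ≤ p.2) : 0 < qWord q l 1 0 := by
  obtain ⟨⟨a, b⟩, l, rfl⟩ := List.exists_cons_of_ne_nil hne
  have hb' : ∀ p ∈ l, 1 ≤ p.2 := fun p hp => hb p (List.mem_cons_of_mem _ hp)
  obtain ⟨h00, h10, -⟩ := qWord_pos_and_rightCF_eq hq hb'
  exact qWord_cons_apply_one_zero_pos hq (hb (a, b) List.mem_cons_self) h00 h10

end

lemma exists_ringHom_ratFunc_real_X_pos : ∃ φ : RatFunc ℚ →+* ℝ, 0 < φ RatFunc.X := by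
  set ξ : ℝ := liouvilleNumber 3
  have hξ : Transcendental ℚ ξ := fun h => transcendental_liouvilleNumber (by norm_num)
    ((IsFractionRing.isAlgebraic_iff ℤ ℚ ℝ).mpr h)
  have hinj := transcendental_iff_injective.mp hξ
  refine ⟨IsFractionRing.lift (K := RatFunc ℚ) hinj, ?_⟩
  rw [← RatFunc.algebraMap_X, IsFractionRing.lift_algebraMap]
  simp only [AlgHom.toRingHom_eq_coe, RingHom.coe_coe, Polynomial.aeval_X, ξ]
  exact (LiouvilleNumber.summable (by norm_num)).tsum_pos (fun _ => by positivity) 0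
    (by positivity)

theorem stmt8_general (r s : ℕ) (L : List (ℕ × ℕ)) (hL : IsCFE L ((r : ℚ) / s)) :
    (qWord (RatFunc.X : RatFunc ℚ) L) 1 0 ≠ 0 ∧
    rightCF (RatFunc.X : RatFunc ℚ) L =
      (qWord (RatFunc.X : RatFunc ℚ) L) 0 0 /
        (qWord (RatFunc.X : RatFunc ℚ) L) 1 0 := by
  obtain ⟨hne, hb, -, -⟩ := hL
  obtain ⟨φ, hX⟩ := exists_ringHom_ratFunc_real_X_pos
  have hentry (i j : Fin 2) : φ (qWord RatFunc.X L i j) = qWord (φ RatFunc.X) L i j := by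
    rw [← map_qWord, RingHom.mapMatrix_apply, Matrix.map_apply]
  have h10 := qWord_apply_one_zero_pos hX hne hb
  obtain ⟨-, -, hCF⟩ := qWord_pos_and_rightCF_eq hX hb
  refine ⟨fun h => by simp [← hentry, h] at h10, φ.injective ?_⟩
  rw [map_rightCF, hCF, map_div₀, hentry, hentry]

theorem stmt8 (r s : ℕ) (hr : 0 < r) (hs : 0 < s) (hco : Nat.Coprime r s)
    (L : List (ℕ × ℕ)) (hL : IsCFE L ((r : ℚ) / s)) :
    (qWord (RatFunc.X : RatFunc ℚ) L) 1 0 ≠ 0 ∧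
    rightCF (RatFunc.X : RatFunc ℚ) L =
      (qWord (RatFunc.X : RatFunc ℚ) L) 0 0 /
        (qWord (RatFunc.X : RatFunc ℚ) L) 1 0 :=
  stmt8_general r s L hL
end
end

section
/- If in the q-weighted Farey recursion one defines R^♯ and S^♯ with weights q^{l+1} as above, then for every positive rational r/s both R^♯(r/s) and S^♯(r/s) are polynomials in q with constant term equal to (respectively) the values R^♯ and S^♯ of the left Farey parent evaluated along the leftmost branch; in particular S^♯(r/s) has constant term 1. -/
/-!
Every term added by the Farey recursion carries a factor `X ^ (l + 1)`, so the constant term of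
`R^♯(r/s)` and `S^♯(r/s)` is that of the left Farey parent `p/q`. Since `p < r`, descending
through left parents ends at `0/1`, where `S^♯ = 1`. The recursion applies at every step because
Bezout gives the Farey decomposition of a reduced fraction, and every positive rational has a
continued fraction expansion of the required shape, so its associated integer `l` exists.
-/

noncomputable section

lemma cfVal_pairsToList_cons (a b : ℕ) (L : List (ℕ × ℕ)) :
    cfVal (pairsToList ((a, b) :: L)) = a + ((b : ℚ) + (cfVal (pairsToList L))⁻¹)⁻¹ := by
  simp [pairsToList, cfVal]

lemma IsCFE.succ_head {a b : ℕ} {L : List (ℕ × ℕ)} {x : ℚ} (h : IsCFE ((a, b) :: L) x) :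
    IsCFE ((a + 1, b) :: L) (x + 1) := by
  obtain ⟨-, hb, ht, hx⟩ := h
  refine ⟨List.cons_ne_nil _ _, ?_, ht, ?_⟩
  · simpa using hb
  · rw [← hx, cfVal_pairsToList_cons, cfVal_pairsToList_cons]
    push_cast
    ring

lemma IsCFE.exists_inv_one_add_inv {L : List (ℕ × ℕ)} {x : ℚ} (h : IsCFE L x) :
    ∃ L', IsCFE L' (1 + x⁻¹)⁻¹ := by
  obtain ⟨hne, hb, ht, hx⟩ := h
  obtain ⟨⟨a, b⟩, L, rfl⟩ := List.exists_cons_of_ne_nil hne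
  rcases Nat.eq_zero_or_pos a with rfl | ha
  · -- `x = 1 / (b + 1 / y)`, so the new expansion only increases `b`
    refine ⟨(0, b + 1) :: L, List.cons_ne_nil _ _, ?_, ht, ?_⟩
    · simpa using (List.forall_mem_cons.mp hb).2
    · rw [← hx, cfVal_pairsToList_cons, cfVal_pairsToList_cons]
      push_cast
      rw [zero_add, zero_add, inv_inv]
      ring
  · refine ⟨(0, 1) :: (a, b) :: L, List.cons_ne_nil _ _, ?_, ?_, ?_⟩
    · simpa using hb
    · exact List.forall_mem_cons.mpr ⟨ha, ht⟩
    · rw [cfVal_pairsToList_cons, hx]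
      push_cast
      ring

lemma exists_isCFE (r s : ℕ) (hr : 0 < r) (hs : 0 < s) : ∃ L, IsCFE L ((r : ℚ) / s) := by
  rcases lt_trichotomy r s with hrs | rfl | hsr
  · obtain ⟨L, hL⟩ := exists_isCFE r (s - r) hr (by lia)
    obtain ⟨L', hL'⟩ := hL.exists_inv_one_add_inv
    refine ⟨L', ?_⟩
    convert hL' using 1
    have hr' : (r : ℚ) ≠ 0 := by positivity
    rw [Nat.cast_sub hrs.le, inv_div, one_add_div hr', inv_div, add_sub_cancel]
  · refine ⟨[(0, 1)], List.cons_ne_nil _ _, by simp, by simp, ?_⟩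
    rw [cfVal_pairsToList_cons, div_self (by positivity)]
    simp [pairsToList, cfVal]
  · obtain ⟨L, hL⟩ := exists_isCFE (r - s) s (by lia) hs
    obtain ⟨⟨a, b⟩, L, rfl⟩ := List.exists_cons_of_ne_nil hL.1
    refine ⟨(a + 1, b) :: L, ?_⟩
    convert hL.succ_head using 1
    have hs' : (s : ℚ) ≠ 0 := by positivity
    rw [Nat.cast_sub hsr.le]
    field_simp
    ring
termination_by r + s

lemma exists_assocInt (r s : ℕ) (hr : 0 < r) (hs : 0 < s) : ∃ l, AssocInt r s l := by
  obtain ⟨L, hL⟩ := exists_isCFE r s hr hs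
  exact ⟨_, L, _, _, hL, List.getLast?_eq_some_getLast hL.1, rfl⟩

lemma fareyDecomp_of_mul_eq_mul_add_one {p q u v : ℕ} (h : u * q = p * v + 1) :
    FareyDecomp p q u v := by
  have hZ : (u : ℤ) * q = p * v + 1 := by exact_mod_cast h
  refine ⟨Nat.isCoprime_iff_coprime.mp ⟨-v, u, ?_⟩, Nat.isCoprime_iff_coprime.mp ⟨q, -p, ?_⟩, h⟩
  all_goals linear_combination hZ

lemma FareyDecomp.snd_pos {p q u v : ℕ} (h : FareyDecomp p q u v) : 0 < q := by
  refine Nat.pos_of_ne_zero fun hq => ?_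
  simpa [hq] using h.2.2

lemma exists_mul_eq_mul_add_one {r s : ℕ} (hco : r.Coprime s) (hr : 0 < r) (hs : 0 < s) :
    ∃ p q, p < r ∧ q ≤ s ∧ r * q = p * s + 1 := by
  obtain rfl | hs1 : s = 1 ∨ 1 < s := by lia
  · exact ⟨r - 1, 1, by lia, le_rfl, by lia⟩
  obtain ⟨q, hqs, hq⟩ := Nat.exists_mul_mod_eq_one_of_coprime hco hs1
  have hdiv : r * q = r * q / s * s + 1 := by rw [← hq, Nat.div_add_mod']
  refine ⟨r * q / s, q, ?_, hqs.le, hdiv⟩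
  by_contra! hle
  nlinarith [Nat.mul_le_mul_right s hle]

lemma exists_fareyDecomp_left_lt {r s : ℕ} (hco : r.Coprime s) (hr : 0 < r) (hs : 0 < s) :
    ∃ p q u v, FareyDecomp p q u v ∧ p + u = r ∧ q + v = s ∧ p < r := by
  obtain ⟨p, q, hpr, hqs, h⟩ := exists_mul_eq_mul_add_one hco hr hs
  refine ⟨p, q, r - p, s - q, fareyDecomp_of_mul_eq_mul_add_one ?_, by lia, by lia, hpr⟩
  zify [hpr.le, hqs] at h ⊢
  linear_combination h

lemma coeff_zero_add_X_pow_succ_mul {R : Type*} [Semiring R] (P Q : Polynomial R) (l : ℕ) :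
    (P + Polynomial.X ^ (l + 1) * Q).coeff 0 = P.coeff 0 := by
  simp [Polynomial.coeff_X_pow]

theorem stmt19_general (R S : ℕ → ℕ → Polynomial ℤ)
    (hS0 : S 0 1 = 1)
    (hrec : ∀ p q u v l : ℕ, FareyDecomp p q u v → AssocInt (p + u) (q + v) l →
      R (p + u) (q + v) = R p q + Polynomial.X ^ (l + 1) * R u v ∧
      S (p + u) (q + v) = S p q + Polynomial.X ^ (l + 1) * S u v)
    :
    (∀ p q u v l : ℕ, FareyDecomp p q u v → AssocInt (p + u) (q + v) l →
      (R (p + u) (q + v)).coeff 0 = (R p q).coeff 0 ∧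
      (S (p + u) (q + v)).coeff 0 = (S p q).coeff 0) ∧
    (∀ r s : ℕ, 0 < r → 0 < s → Nat.Coprime r s → (S r s).coeff 0 = 1) := by
  have hcoeff : ∀ p q u v l : ℕ, FareyDecomp p q u v → AssocInt (p + u) (q + v) l →
      (R (p + u) (q + v)).coeff 0 = (R p q).coeff 0 ∧
      (S (p + u) (q + v)).coeff 0 = (S p q).coeff 0 := by
    intro p q u v l hF hl
    obtain ⟨hR, hS⟩ := hrec p q u v l hF hl
    rw [hR, hS, coeff_zero_add_X_pow_succ_mul, coeff_zero_add_X_pow_succ_mul]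
    exact ⟨rfl, rfl⟩
  refine ⟨hcoeff, ?_⟩
  rintro r s - hs hco
  induction r using Nat.strong_induction_on generalizing s with
  | _ r ih =>
    rcases Nat.eq_zero_or_pos r with rfl | hr
    · rw [(Nat.coprime_zero_left s).mp hco, hS0, Polynomial.coeff_one_zero]
    obtain ⟨p, q, u, v, hF, rfl, rfl, hp⟩ := exists_fareyDecomp_left_lt hco hr hs
    obtain ⟨l, hl⟩ := exists_assocInt (p + u) (q + v) hr hs
    rw [(hcoeff p q u v l hF hl).2]
    exact ih p hp q hF.snd_pos hF.1

theorem stmt19 (R S : ℕ → ℕ → Polynomial ℤ)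
    (hR0 : R 0 1 = 0) (hS0 : S 0 1 = 1) (hRinf : R 1 0 = 1) (hSinf : S 1 0 = 0)
    (hrec : ∀ p q u v l : ℕ, FareyDecomp p q u v → AssocInt (p + u) (q + v) l →
      R (p + u) (q + v) = R p q + Polynomial.X ^ (l + 1) * R u v ∧
      S (p + u) (q + v) = S p q + Polynomial.X ^ (l + 1) * S u v)
    :
    (∀ p q u v l : ℕ, FareyDecomp p q u v → AssocInt (p + u) (q + v) l →
      (R (p + u) (q + v)).coeff 0 = (R p q).coeff 0 ∧
      (S (p + u) (q + v)).coeff 0 = (S p q).coeff 0) ∧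
    (∀ r s : ℕ, 0 < r → 0 < s → Nat.Coprime r s → (S r s).coeff 0 = 1) :=
  stmt19_general R S hS0 hrec
end
end
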